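/- Proposition 4.6 (the contractivity LMI implies strict operator-norm contraction of the whitened cross-covariance). Let Σ_cov and Σ_cr be d×d real matrices with Σ_cov symmetric positive definite, and suppose the 2d×2d block matrix [[Σ_cov, Σ_cr],[Σ_crᵀ, Σ_cov]] is positive semidefinite. Then for every γ ∈ (0,1), ‖γ·Σ_cov^{−1/2}·Σ_cr·Σ_cov^{−1/2}‖ < 1. -/

import Mathlib

/-!
Congruence by `diag(Σ_cov^{-1/2}, Σ_cov^{-1/2})` whitens the block matrix to
`[[1, M], [Mᴴ, 1]]` with `M = Σ_cov^{-1/2} Σ_cr Σ_cov^{-1/2}`. Its Schur complement `1 - Mᴴ M` is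
then positive semidefinite, i.e. `‖M x‖ ≤ ‖x‖` for all `x`, so `‖M‖ ≤ 1` and `‖γ M‖ ≤ γ < 1`.
-/

open scoped Matrix.Norms.L2Operator
open Matrix

/-- The square root of a positive semidefinite matrix, as `Matrix.PosSemidef.sqrt` was defined
in Mathlib (December 2024); it has since been removed in favour of `CFC.sqrt`. -/
noncomputable def Matrix.PosSemidef.sqrt {n : Type*} [Fintype n] [DecidableEq n] {𝕜 : Type*}
    [RCLike 𝕜] [PartialOrder 𝕜] {A : Matrix n n 𝕜} (hA : A.PosSemidef) : Matrix n n 𝕜 :=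
  (hA.1.eigenvectorUnitary : Matrix n n 𝕜) * diagonal ((↑) ∘ (Real.sqrt ∘ hA.1.eigenvalues)) *
    (star (hA.1.eigenvectorUnitary : Matrix n n 𝕜))

open scoped ComplexOrder

lemma EuclideanSpace.star_dotProduct_self {𝕜 ι : Type*} [RCLike 𝕜] [Fintype ι] (v : ι → 𝕜) :
    star v ⬝ᵥ v = (‖(WithLp.toLp 2 v : EuclideanSpace 𝕜 ι)‖ : 𝕜) ^ 2 := by
  rw [← inner_self_eq_norm_sq_to_K, EuclideanSpace.inner_toLp_toLp, dotProduct_comm]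

namespace Matrix

variable {𝕜 m n m' n' : Type*} [RCLike 𝕜] [Fintype m] [Fintype n]

lemma PosSemidef.isHermitian_sqrt [DecidableEq n] [PartialOrder 𝕜] {A : Matrix n n 𝕜}
    (hA : A.PosSemidef) : hA.sqrt.IsHermitian := by
  rw [PosSemidef.sqrt, star_eq_conjTranspose]
  refine isHermitian_mul_mul_conjTranspose _ (isHermitian_diagonal_of_self_adjoint _ ?_)
  ext i
  simp

lemma PosSemidef.sqrt_mul_self [DecidableEq n] {A : Matrix n n 𝕜} (hA : A.PosSemidef) :
    hA.sqrt * hA.sqrt = A := by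
  set U : Matrix n n 𝕜 := (hA.1.eigenvectorUnitary : Matrix n n 𝕜)
  have hU : star U * U = 1 := Unitary.coe_star_mul_self _
  conv_rhs => rw [hA.1.spectral_theorem, Unitary.conjStarAlgAut_apply]
  calc hA.sqrt * hA.sqrt = U * (diagonal _ * (star U * U) * diagonal _) * star U := by
        simp only [PosSemidef.sqrt, Matrix.mul_assoc]; rfl
    _ = _ := by
        rw [hU, Matrix.mul_one, diagonal_mul_diagonal]
        congr 3
        funext i
        simp [← RCLike.ofReal_mul, Real.mul_self_sqrt (hA.eigenvalues_nonneg i)]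

lemma PosSemidef.fromBlocks_conjTranspose_mul_mul [Fintype m'] [Fintype n']
    {A : Matrix m m 𝕜} {B : Matrix m n 𝕜} {D : Matrix n n 𝕜}
    (h : (fromBlocks A B Bᴴ D).PosSemidef) (P : Matrix m m' 𝕜) (Q : Matrix n n' 𝕜) :
    (fromBlocks (Pᴴ * A * P) (Pᴴ * B * Q) (Pᴴ * B * Q)ᴴ (Qᴴ * D * Q)).PosSemidef := by
  convert h.conjTranspose_mul_mul_same (fromBlocks P 0 0 Q) using 1
  simp [fromBlocks_conjTranspose, fromBlocks_multiply, Matrix.mul_assoc]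

lemma posSemidef_fromBlocks_one_of_mul_self_eq [DecidableEq n] {S A B : Matrix n n 𝕜}
    (hS : S.IsHermitian) (hSu : IsUnit S) (hSA : S * S = A)
    (h : (fromBlocks A B Bᴴ A).PosSemidef) :
    (fromBlocks 1 (S⁻¹ * B * S⁻¹) (S⁻¹ * B * S⁻¹)ᴴ 1).PosSemidef := by
  have hinv : (S⁻¹)ᴴ = S⁻¹ := hS.inv.eq
  have hwhite : S⁻¹ * A * S⁻¹ = 1 := by
    have hdet := (isUnit_iff_isUnit_det S).mp hSu
    rw [← hSA, ← Matrix.mul_assoc, nonsing_inv_mul _ hdet, Matrix.one_mul,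
      mul_nonsing_inv _ hdet]
  simpa only [hinv, hwhite] using h.fromBlocks_conjTranspose_mul_mul S⁻¹ S⁻¹

lemma l2_opNorm_le_one_of_posSemidef_one_sub [DecidableEq n] {M : Matrix m n 𝕜}
    (h : (1 - Mᴴ * M).PosSemidef) : ‖M‖ ≤ 1 := by
  rw [l2_opNorm_def]
  refine ContinuousLinearMap.opNorm_le_bound _ zero_le_one fun x => ?_
  rw [one_mul]
  change ‖(WithLp.toLp 2 (M *ᵥ WithLp.ofLp x) : EuclideanSpace 𝕜 m)‖ ≤ ‖x‖
  have := h.dotProduct_mulVec_nonneg (WithLp.ofLp x)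
  rw [sub_mulVec, one_mulVec, dotProduct_sub, ← mulVec_mulVec, dotProduct_mulVec, ← star_mulVec,
    EuclideanSpace.star_dotProduct_self, EuclideanSpace.star_dotProduct_self, sub_nonneg,
    WithLp.toLp_ofLp] at this
  exact (sq_le_sq₀ (norm_nonneg _) (norm_nonneg _)).mp (by exact_mod_cast this)

lemma l2_opNorm_le_one_of_posSemidef_fromBlocks [DecidableEq m] [DecidableEq n]
    {M : Matrix m n 𝕜} (h : (fromBlocks 1 M Mᴴ 1).PosSemidef) : ‖M‖ ≤ 1 :=
  letI : Invertible (1 : Matrix m m 𝕜) := invertibleOne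
  l2_opNorm_le_one_of_posSemidef_one_sub <| by
    simpa using (PosDef.fromBlocks₁₁ M 1 PosDef.one).mp h

end Matrix

/-- Proposition 4.6: the contractivity LMI of Kolter (2011) — positive
semidefiniteness of the block matrix `[[Σ_cov, Σ_cr],[Σ_crᵀ, Σ_cov]]` — implies
that the whitened cross-covariance `γ·Σ_cov^{-1/2}·Σ_cr·Σ_cov^{-1/2}` has
operator norm strictly less than 1 for every `γ ∈ (0,1)`. -/
theorem stmt_13 (d : ℕ) (Scov Scr : Matrix (Fin d) (Fin d) ℝ)
    (hcov : Scov.PosDef)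
    (hblock : (Matrix.fromBlocks Scov Scr Scrᵀ Scov).PosSemidef)
    (γ : ℝ) (hγ0 : 0 < γ) (hγ1 : γ < 1) :
    ‖γ • (hcov.posSemidef.sqrt⁻¹ * Scr * hcov.posSemidef.sqrt⁻¹)‖ < 1 := by
  have hsq := hcov.posSemidef.sqrt_mul_self
  have hunit : IsUnit hcov.posSemidef.sqrt := isUnit_of_mul_isUnit_left (hsq ▸ hcov.isUnit)
  have hM := l2_opNorm_le_one_of_posSemidef_fromBlocks <|
    posSemidef_fromBlocks_one_of_mul_self_eq hcov.posSemidef.isHermitian_sqrt hunit hsq hblock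
  calc ‖γ • _‖ = γ * ‖hcov.posSemidef.sqrt⁻¹ * Scr * hcov.posSemidef.sqrt⁻¹‖ := by
        rw [norm_smul, Real.norm_of_nonneg hγ0.le]
    _ ≤ γ * 1 := by gcongr
    _ < 1 := by linarith
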